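/- arXiv:2001.00767 — 3 statements merged into one kernel-verified Lean document; each statement's English description precedes it below -/
import Mathlib

section
/- Let h : ℝ^d → ℝ be differentiable with M_h-Lipschitz gradient, and σ : ℝ^d → ℝ proper lower semicontinuous with inf σ > -∞. Fix t > M_h and u ∈ dom σ. If u⁺ minimizes w ↦ σ(w) + ⟨∇h(u), w - u⟩ + (t/2)‖w - u‖², then h(u⁺) + σ(u⁺) ≤ h(u) + σ(u) - ((t - M_h)/2)‖u⁺ - u‖². -/
/-!
By the descent lemma for the `M`-Lipschitz gradient,
`h u⁺ ≤ h u + ⟪∇h u, u⁺ - u⟫ + M/2 ‖u⁺ - u‖²`, while comparing the proximal objective at `u⁺`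
with its value at `w = u` gives `σ u⁺ + ⟪∇h u, u⁺ - u⟫ + t/2 ‖u⁺ - u‖² ≤ σ u`.
Adding the two inequalities gives the claim.
-/

open RealInnerProductSpace

section Descent

variable {E : Type*} [NormedAddCommGroup E] [NormedSpace ℝ E]
  {f : E → ℝ} {f' : E → E →L[ℝ] ℝ} {M : ℝ}

theorem fderiv_sub_apply_le_of_norm_fderiv_sub_le
    (hlip : ∀ x y, ‖f' x - f' y‖ ≤ M * ‖x - y‖) (u v : E) {s : ℝ} (hs : 0 ≤ s) :
    f' (u + s • v) v - f' u v ≤ M * s * ‖v‖ ^ 2 :=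
  calc f' (u + s • v) v - f' u v ≤ ‖f' (u + s • v) - f' u‖ * ‖v‖ :=
        (le_abs_self _).trans (ContinuousLinearMap.le_opNorm (f' (u + s • v) - f' u) v)
    _ ≤ M * ‖s • v‖ * ‖v‖ := by
        gcongr
        simpa using hlip (u + s • v) u
    _ = M * s * ‖v‖ ^ 2 := by
        rw [norm_smul, Real.norm_of_nonneg hs]
        ring

theorem image_add_le_of_norm_fderiv_sub_le (hf : ∀ x, HasFDerivAt f (f' x) x)
    (hlip : ∀ x y, ‖f' x - f' y‖ ≤ M * ‖x - y‖) (u v : E) :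
    f (u + v) ≤ f u + f' u v + M / 2 * ‖v‖ ^ 2 := by
  have hline : ∀ s : ℝ, HasDerivAt (fun s : ℝ => f (u + s • v) - s * f' u v)
      (f' (u + s • v) v - f' u v) s := fun s => by
    have hcomp := (hf (u + s • v)).comp_hasDerivAt s
      (((hasDerivAt_id s).smul_const v).const_add u)
    exact (hcomp.sub ((hasDerivAt_id s).mul_const (f' u v))).congr_deriv (by simp)
  have hbound : ∀ s : ℝ, HasDerivAt (fun s : ℝ => f u + M / 2 * s ^ 2 * ‖v‖ ^ 2)
      (M * s * ‖v‖ ^ 2) s := fun s =>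
    ((((hasDerivAt_pow 2 s).const_mul (M / 2)).mul_const (‖v‖ ^ 2)).const_add
      (f u)).congr_deriv (by ring)
  have key := image_le_of_deriv_right_le_deriv_boundary
    (fun s _ => (hline s).continuousAt.continuousWithinAt)
    (fun s _ => (hline s).hasDerivWithinAt) (by simp)
    (fun s _ => (hbound s).continuousAt.continuousWithinAt)
    (fun s _ => (hbound s).hasDerivWithinAt)
    (fun s hs => fderiv_sub_apply_le_of_norm_fderiv_sub_le hlip u v hs.1)
    (Set.right_mem_Icc.2 zero_le_one)
  simp only [one_smul, one_mul, one_pow, mul_one] at key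
  linarith

end Descent

theorem sufficient_decrease_general {d : ℕ} (h σ : EuclideanSpace ℝ (Fin d) → ℝ)
    (h' : EuclideanSpace ℝ (Fin d) → EuclideanSpace ℝ (Fin d)) (M t : ℝ)
    (hdiff : ∀ x, HasGradientAt h (h' x) x)
    (hlip : ∀ x y, ‖h' x - h' y‖ ≤ M * ‖x - y‖)
    (u uplus : EuclideanSpace ℝ (Fin d))
    (hmin : ∀ w, σ uplus + ⟪h' u, uplus - u⟫ + t / 2 * ‖uplus - u‖ ^ 2
      ≤ σ w + ⟪h' u, w - u⟫ + t / 2 * ‖w - u‖ ^ 2) :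
    h uplus + σ uplus ≤ h u + σ u - (t - M) / 2 * ‖uplus - u‖ ^ 2 := by
  have hdual_lip : ∀ x y, ‖InnerProductSpace.toDual ℝ _ (h' x) - InnerProductSpace.toDual ℝ _ (h' y)‖
      ≤ M * ‖x - y‖ := fun x y => by
    simpa only [← map_sub, LinearIsometryEquiv.norm_map] using hlip x y
  have hdescent := image_add_le_of_norm_fderiv_sub_le (fun x => (hdiff x).hasFDerivAt)
    hdual_lip u (uplus - u)
  have hprox := hmin u
  simp only [add_sub_cancel, InnerProductSpace.toDual_apply_apply, sub_self, inner_zero_right,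
    norm_zero] at hdescent hprox
  linarith

/-- Sufficient decrease property of a proximal gradient step. -/
theorem sufficient_decrease {d : ℕ} (h σ : EuclideanSpace ℝ (Fin d) → ℝ)
    (h' : EuclideanSpace ℝ (Fin d) → EuclideanSpace ℝ (Fin d)) (M t : ℝ)
    (hdiff : ∀ x, HasGradientAt h (h' x) x)
    (hlip : ∀ x y, ‖h' x - h' y‖ ≤ M * ‖x - y‖)
    (hσ : LowerSemicontinuous σ) (hσbdd : BddBelow (Set.range σ))
    (ht : M < t) (u uplus : EuclideanSpace ℝ (Fin d))
    (hmin : ∀ w, σ uplus + ⟪h' u, uplus - u⟫ + t / 2 * ‖uplus - u‖ ^ 2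
      ≤ σ w + ⟪h' u, w - u⟫ + t / 2 * ‖w - u‖ ^ 2) :
    h uplus + σ uplus ≤ h u + σ u - (t - M) / 2 * ‖uplus - u‖ ^ 2 :=
  sufficient_decrease_general h σ h' M t hdiff hlip u uplus hmin
end

section
/- Let (ρ_k) be a nondecreasing sequence of positive reals defined by the rule: ρ_{k+1} = ρ_k + δ if r_k > η and ρ_{k+1} = ρ_k otherwise, where δ > 0, η > 0, and r_k = C/ρ_{k-1} for some constant C > 0. Then there exists k̄ ∈ ℕ such that r_k ≤ η for all k ≥ k̄, and ρ_k = ρ_{k̄} for all k ≥ k̄. -/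
/-!
Every step of the rule raises `ρ` by `δ` or leaves it unchanged. If `ρ` is bounded it converges,
so its steps eventually fall below `δ` and hence vanish. If `ρ` is unbounded it tends to `∞`, so
the residual `C / ρ` tends to `0` and eventually drops below `η`, after which the rule no longer
raises `ρ`. Either way `ρ` is eventually constant, and a step that leaves `ρ` unchanged has
residual at most `η`.
-/

open Filter Topology Set

theorem monotone_of_succ_eq_or_add_le {a : ℕ → ℝ} {δ : ℝ} (hδ : 0 ≤ δ)
    (hstep : ∀ k, a (k + 1) = a k ∨ a k + δ ≤ a (k + 1)) : Monotone a :=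
  monotone_nat_of_le_succ fun k => by rcases hstep k with h | h <;> linarith

theorem eventually_succ_eq_of_bddAbove {a : ℕ → ℝ} {δ : ℝ} (hδ : 0 < δ)
    (hstep : ∀ k, a (k + 1) = a k ∨ a k + δ ≤ a (k + 1)) (hbdd : BddAbove (range a)) :
    ∀ᶠ k in atTop, a (k + 1) = a k := by
  have hlim := tendsto_atTop_ciSup (monotone_of_succ_eq_or_add_le hδ.le hstep) hbdd
  have hgap : Tendsto (fun k => a (k + 1) - a k) atTop (𝓝 0) := by
    simpa using ((tendsto_add_atTop_iff_nat 1).2 hlim).sub hlim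
  filter_upwards [hgap.eventually_lt_const hδ] with k hk
  exact (hstep k).resolve_right fun h => by linarith

theorem exists_forall_ge_eq_of_eventually_succ_eq {α : Type*} {a : ℕ → α}
    (h : ∀ᶠ k in atTop, a (k + 1) = a k) : ∃ K, ∀ k ≥ K, a k = a K := by
  obtain ⟨K, hK⟩ := eventually_atTop.1 h
  refine ⟨K, fun k hk => ?_⟩
  induction k, hk using Nat.le_induction with
  | base => rfl
  | succ k hk ih => rw [hK k hk, ih]

theorem penalty_freezes_general (ρ r : ℕ → ℝ) (δ η C : ℝ) (hδ : 0 < δ) (hη : 0 < η)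
    (hr : ∀ k, r (k + 1) = C / ρ k)
    (hrule : ∀ k, ρ (k + 1) = if η < r k then ρ k + δ else ρ k) :
    ∃ kbar : ℕ, (∀ k ≥ kbar, r k ≤ η) ∧ ∀ k ≥ kbar, ρ k = ρ kbar := by
  have hstep : ∀ k, ρ (k + 1) = ρ k ∨ ρ k + δ ≤ ρ (k + 1) := fun k => by
    rw [hrule k]; split_ifs <;> simp
  have hfrozen : ∀ k, ρ (k + 1) = ρ k → r k ≤ η := fun k h => by
    by_contra! hk
    rw [hrule k, if_pos hk] at h
    linarith
  have hstationary : ∀ᶠ k in atTop, ρ (k + 1) = ρ k := by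
    by_cases hbdd : BddAbove (range ρ)
    · exact eventually_succ_eq_of_bddAbove hδ hstep hbdd
    have hmono := monotone_of_succ_eq_or_add_le hδ.le hstep
    have hres : Tendsto r atTop (𝓝 0) := by
      refine (tendsto_add_atTop_iff_nat 1).1 ?_
      simpa only [hr] using (tendsto_atTop_atTop_of_monotone' hmono hbdd).const_div_atTop C
    filter_upwards [hres.eventually_lt_const hη] with k hk
    rw [hrule k, if_neg hk.not_gt]
  obtain ⟨K, hK⟩ := exists_forall_ge_eq_of_eventually_succ_eq hstationary
  refine ⟨K, fun k hk => hfrozen k ?_, hK⟩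
  rw [hK k hk, hK (k + 1) (by omega)]

/-- The adaptive penalty rule eventually freezes and the residual falls below the
threshold. -/
theorem penalty_freezes (ρ r : ℕ → ℝ) (δ η C : ℝ) (hδ : 0 < δ) (hη : 0 < η)
    (hC : 0 < C) (hρ0 : 0 < ρ 0)
    (hr : ∀ k, r (k + 1) = C / ρ k)
    (hrule : ∀ k, ρ (k + 1) = if η < r k then ρ k + δ else ρ k) :
    ∃ kbar : ℕ, (∀ k ≥ kbar, r k ≤ η) ∧ ∀ k ≥ kbar, ρ k = ρ kbar :=
  penalty_freezes_general ρ r δ η C hδ hη hr hrule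
end

section
/- Let F : ℝ^n → ℝ^{m×n} be a matrix-valued map satisfying the uniform regularity condition ‖F(x)ᵀ v‖ ≥ θ‖v‖ for all v ∈ ℝ^m and all x in a set S, with θ > 0. Suppose x, x⁺ ∈ S, γ, γ⁺ ∈ ℝ^m with ‖γ‖ ≤ M_γ, ‖F(x⁺) - F(x)‖ ≤ M_F ‖x⁺ - x‖ (operator norm), and ‖F(x⁺)ᵀ γ⁺ - F(x)ᵀ γ‖ ≤ D. Then ‖γ⁺ - γ‖ ≤ (D + M_F M_γ ‖x⁺ - x‖)/θ. -/
/-- Bounding the change of dual multipliers via uniform regularity of the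
constraint Jacobian (transpose viewed as a linear map). -/
theorem dual_difference_bound {n m : ℕ}
    (G : EuclideanSpace ℝ (Fin n) →
      (EuclideanSpace ℝ (Fin m) →L[ℝ] EuclideanSpace ℝ (Fin n)))
    (S : Set (EuclideanSpace ℝ (Fin n))) (θ : ℝ) (hθ : 0 < θ)
    (hreg : ∀ x ∈ S, ∀ v, θ * ‖v‖ ≤ ‖G x v‖)
    (x xplus : EuclideanSpace ℝ (Fin n)) (hx : x ∈ S) (hxp : xplus ∈ S)
    (γ γplus : EuclideanSpace ℝ (Fin m)) (Mγ MF D : ℝ)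
    (hγ : ‖γ‖ ≤ Mγ)
    (hF : ‖G xplus - G x‖ ≤ MF * ‖xplus - x‖)
    (hD : ‖G xplus γplus - G x γ‖ ≤ D) :
    ‖γplus - γ‖ ≤ (D + MF * Mγ * ‖xplus - x‖) / θ := by
  rw [le_div_iff₀ hθ]
  have key : G xplus (γplus - γ)
      = (G xplus γplus - G x γ) - ((G xplus - G x) γ) := by
    simp [map_sub]
  have h1 : θ * ‖γplus - γ‖ ≤ ‖G xplus (γplus - γ)‖ := hreg xplus hxp _
  have h2 : ‖(G xplus - G x) γ‖ ≤ (MF * ‖xplus - x‖) * Mγ := by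
    calc ‖(G xplus - G x) γ‖ ≤ ‖G xplus - G x‖ * ‖γ‖ :=
          (G xplus - G x).le_opNorm γ
      _ ≤ (MF * ‖xplus - x‖) * Mγ := by
          apply mul_le_mul hF hγ (norm_nonneg _)
          exact le_trans (norm_nonneg _) hF
  have h3 : ‖G xplus (γplus - γ)‖ ≤ D + MF * Mγ * ‖xplus - x‖ := by
    rw [key]
    calc ‖(G xplus γplus - G x γ) - ((G xplus - G x) γ)‖
        ≤ ‖G xplus γplus - G x γ‖ + ‖(G xplus - G x) γ‖ := norm_sub_le _ _
      _ ≤ D + MF * Mγ * ‖xplus - x‖ := by nlinarith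
  nlinarith
end
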